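/- Every signed circuit of the oriented matroid M_T of a polygon triangulation T has underlying set a 5-subset {a ≺ b ≺ c ≺ d ≺ e} of [m], with positive part {a,c,e} and negative part {b,d}, or vice versa. -/
import Mathlib


namespace CyclicTri

variable {m : ℕ}

/-- Position of `v` relative to base point `a` in the cyclic order on `ZMod m`. -/
def pos (a v : ZMod m) : ℕ := (v - a).val

/-- `a ≺ b ≺ c` in the cyclic order. -/
def Cyc3 (a b c : ZMod m) : Prop := 0 < pos a b ∧ pos a b < pos a c

/-- `a ≺ b ≺ c ≺ d` in the cyclic order. -/
def Cyc4 (a b c d : ZMod m) : Prop :=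
  0 < pos a b ∧ pos a b < pos a c ∧ pos a c < pos a d

/-- The arcs `xy` and `x'y'` cross: their endpoints interleave cyclically. -/
def Cross (x y x' y' : ZMod m) : Prop := Cyc4 x x' y y' ∨ Cyc4 x' x y' y

/-- `xy` is a diagonal of the polygon: the endpoints are distinct and non-adjacent. -/
def Diag (x y : ZMod m) : Prop := x ≠ y ∧ y ≠ x + 1 ∧ x ≠ y + 1

/-- `A` is (the symmetrised set of arcs of) a triangulation of the convex `m`-gon:
a maximal set of pairwise non-crossing diagonals. -/
def IsTriangulation (A : Set (ZMod m × ZMod m)) : Prop :=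
  (∀ x y, (x, y) ∈ A → (y, x) ∈ A) ∧
  (∀ x y, (x, y) ∈ A → Diag x y) ∧
  (∀ x y x' y', (x, y) ∈ A → (x', y') ∈ A → ¬ Cross x y x' y') ∧
  (∀ x y, Diag x y → (∀ x' y', (x', y') ∈ A → ¬ Cross x y x' y') → (x, y) ∈ A)

/-- There is an arc `xy` of `A` with `a ≺ b ≼ x ≺ c ≺ d ≼ y` (the `+1` case of `χ_T`). -/
def PosCase (A : Set (ZMod m × ZMod m)) (a b c d : ZMod m) : Prop :=
  ∃ x y, (x, y) ∈ A ∧ 0 < pos a b ∧ pos a b ≤ pos a x ∧ pos a x < pos a c ∧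
    pos a c < pos a d ∧ pos a d ≤ pos a y

/-- There is an arc `xy` of `A` with `a ≼ x ≺ b ≺ c ≼ y ≺ d` (the `-1` case of `χ_T`). -/
def NegCase (A : Set (ZMod m × ZMod m)) (a b c d : ZMod m) : Prop :=
  ∃ x y, (x, y) ∈ A ∧ pos a x < pos a b ∧ pos a b < pos a c ∧ pos a c ≤ pos a y ∧
    pos a y < pos a d

open Classical in
/-- The chirotope `χ_T` on cyclically ordered tuples `a ≺ b ≺ c ≺ d`. -/
noncomputable def chiCyc (A : Set (ZMod m × ZMod m)) (a b c d : ZMod m) : ℤ :=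
  if PosCase A a b c d then 1 else if NegCase A a b c d then -1 else 0

end CyclicTri
namespace CyclicTri
variable {m : ℕ}

/-- `a ≺ b ≺ c ≺ d ≺ e` in the cyclic order, for a 5-tuple. -/
def Cyc5 (v : Fin 5 → ZMod m) : Prop :=
  0 < pos (v 0) (v 1) ∧ pos (v 0) (v 1) < pos (v 0) (v 2) ∧
    pos (v 0) (v 2) < pos (v 0) (v 3) ∧ pos (v 0) (v 3) < pos (v 0) (v 4)

/-- The signs of the signed circuit supported on the `5`-subset
`{v 0, …, v 4}` of the uniform rank-4 oriented matroid with chirotope `chiCyc A`: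
the sign of `v i` is `(-1)^i` times the chirotope of the complementary `4`-tuple. -/
noncomputable def circSign (A : Set (ZMod m × ZMod m)) (v : Fin 5 → ZMod m) :
    Fin 5 → ℤ := fun i =>
  if i = 0 then chiCyc A (v 1) (v 2) (v 3) (v 4)
  else if i = 1 then - chiCyc A (v 0) (v 2) (v 3) (v 4)
  else if i = 2 then chiCyc A (v 0) (v 1) (v 3) (v 4)
  else if i = 3 then - chiCyc A (v 0) (v 1) (v 2) (v 4)
  else chiCyc A (v 0) (v 1) (v 2) (v 3)

end CyclicTri

namespace CyclicTri

variable {m : ℕ}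

lemma pos_lt [NeZero m] (a v : ZMod m) : pos a v < m := ZMod.val_lt _

lemma pos_base [NeZero m] (a b v : ZMod m) :
    pos b v = if pos a b ≤ pos a v then pos a v - pos a b else pos a v + m - pos a b := by
  have h1 : v - b = (v - a) - (b - a) := by ring
  unfold pos
  rw [h1]
  set x := v - a with hx
  set y := b - a with hy
  rcases eq_or_ne y 0 with h | h
  · rw [h, sub_zero]
    simp
  · have hyv : y.val ≠ 0 := by simpa [ZMod.val_eq_zero] using h
    have hxl : x.val < m := ZMod.val_lt x
    have hyl : y.val < m := ZMod.val_lt y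
    rw [sub_eq_add_neg, ZMod.val_add, ZMod.neg_val, if_neg h]
    split_ifs with hle
    · have e : x.val + (m - y.val) = m + (x.val - y.val) := by omega
      rw [e, Nat.add_mod_left, Nat.mod_eq_of_lt (by omega)]
    · rw [Nat.mod_eq_of_lt (by omega)]
      omega

lemma pos_succ [NeZero m] (hm : 2 ≤ m) (y : ZMod m) : pos y (y + 1) = 1 := by
  have h : y + 1 - y = 1 := by ring
  unfold pos
  rw [h, ZMod.val_one_eq_one_mod, Nat.mod_eq_of_lt (by omega)]

lemma cross_encode [NeZero m] (a : ZMod m) {s t q r : ZMod m}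
    (h1 : pos a s < pos a q) (h2 : pos a q < pos a t)
    (h3 : pos a r < pos a s ∨ pos a t < pos a r) : Cross s t q r := by
  have hs := pos_lt a s; have ht := pos_lt a t
  have hq := pos_lt a q; have hr := pos_lt a r
  left
  unfold Cyc4
  rw [pos_base a s q, pos_base a s t, pos_base a s r]
  split_ifs <;> omega

lemma cross_encode' [NeZero m] (a : ZMod m) {s t q r : ZMod m}
    (h1 : pos a s < pos a r) (h2 : pos a r < pos a t)
    (h3 : pos a q < pos a s ∨ pos a t < pos a q) : Cross s t q r := by
  have hs := pos_lt a s; have ht := pos_lt a t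
  have hq := pos_lt a q; have hr := pos_lt a r
  right
  unfold Cyc4
  rw [pos_base a q s, pos_base a q r, pos_base a q t]
  split_ifs <;> omega

lemma cross_decode [NeZero m] (a : ZMod m) {s t q r : ZMod m}
    (hst : pos a s < pos a t) (h : Cross s t q r) :
    (pos a s < pos a q ∧ pos a q < pos a t ∧ (pos a r < pos a s ∨ pos a t < pos a r)) ∨
    (pos a s < pos a r ∧ pos a r < pos a t ∧ (pos a q < pos a s ∨ pos a t < pos a q)) := by
  have hs := pos_lt a s; have ht := pos_lt a t
  have hq := pos_lt a q; have hr := pos_lt a r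
  rcases h with ⟨h1, h2, h3⟩ | ⟨h1, h2, h3⟩
  · left
    rw [pos_base a s q] at h1 h2
    rw [pos_base a s t] at h2 h3
    rw [pos_base a s r] at h3
    split_ifs at h1 h2 h3 <;> omega
  · right
    rw [pos_base a q s] at h1 h2
    rw [pos_base a q r] at h2 h3
    rw [pos_base a q t] at h3
    split_ifs at h1 h2 h3 <;> omega

lemma tot [NeZero m] (hm : 4 ≤ m) {A : Set (ZMod m × ZMod m)} (hT : IsTriangulation A)
    {a b c d : ZMod m} (h : Cyc4 a b c d) :
    PosCase A a b c d ∨ NegCase A a b c d := by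
  by_contra hcon
  push_neg at hcon
  obtain ⟨hP, hN⟩ := hcon
  obtain ⟨hb, hbc, hcd⟩ := h
  have hdm : pos a d < m := pos_lt a d
  set S : ZMod m → ZMod m → Set (ZMod m × ZMod m) :=
    fun x y => {q | q ∈ A ∧ Cross x y q.1 q.2} with hS
  suffices hmain : ∀ n x y, pos a b ≤ pos a x → pos a x < pos a c → pos a d ≤ pos a y →
      (S x y).ncard = n → False by exact hmain _ b d le_rfl hbc le_rfl rfl
  intro n
  induction n using Nat.strong_induction_on with
  | _ n ih =>
  intro x y hx1 hx2 hy1 hcn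
  have hxm := pos_lt a x
  have hym := pos_lt a y
  have hxy : pos a x < pos a y := by omega
  have hdiag : Diag x y := by
    refine ⟨?_, ?_, ?_⟩
    · intro he
      rw [he] at hxy
      omega
    · intro he
      have h1 : pos x y = 1 := by rw [he]; exact pos_succ (by omega) x
      rw [pos_base a x y, if_pos (le_of_lt hxy)] at h1
      omega
    · intro he
      have h1 : pos y x = 1 := by rw [he]; exact pos_succ (by omega) y
      rw [pos_base a y x, if_neg (by omega)] at h1
      omega
  by_cases hnc : ∀ u w, (u, w) ∈ A → ¬ Cross x y u w
  · exact hP ⟨x, y, hT.2.2.2 x y hdiag hnc, hb, hx1, hx2, hcd, hy1⟩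
  push_neg at hnc
  obtain ⟨u0, w0, huwA0, hXuw0⟩ := hnc
  have step : ∀ u w, (u, w) ∈ A → pos a x < pos a u → pos a u < pos a y →
      (pos a w < pos a x ∨ pos a y < pos a w) → False := by
    intro u w huw hu1 hu2 hw
    have hum := pos_lt a u
    have hwm := pos_lt a w
    have hwuA := hT.1 _ _ huw
    rcases lt_or_ge (pos a u) (pos a c) with huc | hcu
    · -- Case 1: new chord (u, y)
      have hsub : S u y ⊆ S x y := by
        rintro ⟨q, r⟩ ⟨hqrA, hcr⟩
        have hqm := pos_lt a q
        have hrm := pos_lt a r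
        have hcr' : Cross u y q r := hcr
        refine ⟨hqrA, ?_⟩
        show Cross x y q r
        rcases cross_decode a (by omega) hcr' with ⟨h1, h2, h3⟩ | ⟨h1, h2, h3⟩
        · rcases h3 with h3 | h3
          · rcases lt_or_ge (pos a r) (pos a x) with h4 | h4
            · exact cross_encode a (by omega) (by omega) (Or.inl h4)
            · exfalso
              rcases hw with hw | hw
              · exact hT.2.2.1 w u q r hwuA hqrA
                  (cross_encode' a (by omega) (by omega) (Or.inr (by omega)))
              · exact hT.2.2.1 u w q r huw hqrA
                  (cross_encode a (by omega) (by omega) (Or.inl (by omega)))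
          · exact cross_encode a (by omega) (by omega) (Or.inr h3)
        · rcases h3 with h3 | h3
          · rcases lt_or_ge (pos a q) (pos a x) with h4 | h4
            · exact cross_encode' a (by omega) (by omega) (Or.inl h4)
            · exfalso
              rcases hw with hw | hw
              · exact hT.2.2.1 w u q r hwuA hqrA
                  (cross_encode a (by omega) (by omega) (Or.inr (by omega)))
              · exact hT.2.2.1 u w q r huw hqrA
                  (cross_encode' a (by omega) (by omega) (Or.inl (by omega)))
          · exact cross_encode' a (by omega) (by omega) (Or.inr h3)
      have hwit_in : (u, w) ∈ S x y := ⟨huw, show Cross x y u w from cross_encode a hu1 hu2 hw⟩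
      have hwit_out : (u, w) ∉ S u y := by
        rintro ⟨-, hc⟩
        have hc' : Cross u y u w := hc
        rcases cross_decode a (by omega : pos a u < pos a y) hc' with
          ⟨h1, -, -⟩ | ⟨-, h2, h3 | h3⟩ <;> omega
      have hss : S u y ⊂ S x y := ⟨hsub, fun hsup => hwit_out (hsup hwit_in)⟩
      have hlt : (S u y).ncard < n := hcn ▸ Set.ncard_lt_ncard hss (Set.toFinite _)
      exact ih _ hlt u y (by omega) huc hy1 rfl
    · rcases lt_or_ge (pos a u) (pos a d) with hud | hdu
      · -- Case 3: pos a c ≤ pos a u < pos a d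
        rcases hw with hw | hw
        · rcases lt_or_ge (pos a w) (pos a b) with hwb | hbw
          · exact hN ⟨w, u, hwuA, hwb, hbc, hcu, hud⟩
          · -- 3b: new chord (w, y)
            have hsub : S w y ⊆ S x y := by
              rintro ⟨q, r⟩ ⟨hqrA, hcr⟩
              have hqm := pos_lt a q
              have hrm := pos_lt a r
              have hcr' : Cross w y q r := hcr
              refine ⟨hqrA, ?_⟩
              show Cross x y q r
              rcases cross_decode a (by omega : pos a w < pos a y) hcr' with
                ⟨h1, h2, h3⟩ | ⟨h1, h2, h3⟩
              · rcases lt_or_ge (pos a x) (pos a q) with h4 | h4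
                · refine cross_encode a h4 h2 ?_
                  rcases h3 with h3 | h3
                  · exact Or.inl (by omega)
                  · exact Or.inr h3
                · exfalso
                  refine hT.2.2.1 w u q r hwuA hqrA
                    (cross_encode a h1 (by omega) ?_)
                  rcases h3 with h3 | h3
                  · exact Or.inl h3
                  · exact Or.inr (by omega)
              · rcases lt_or_ge (pos a x) (pos a r) with h4 | h4
                · refine cross_encode' a h4 h2 ?_
                  rcases h3 with h3 | h3
                  · exact Or.inl (by omega)
                  · exact Or.inr h3
                · exfalso
                  refine hT.2.2.1 w u q r hwuA hqrA
                    (cross_encode' a h1 (by omega) ?_)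
                  rcases h3 with h3 | h3
                  · exact Or.inl h3
                  · exact Or.inr (by omega)
            have hwit_in : (u, w) ∈ S x y :=
              ⟨huw, show Cross x y u w from cross_encode a (by omega) (by omega) (Or.inl hw)⟩
            have hwit_out : (u, w) ∉ S w y := by
              rintro ⟨-, hc⟩
              have hc' : Cross w y u w := hc
              rcases cross_decode a (by omega : pos a w < pos a y) hc' with
                ⟨h1, h2, h3 | h3⟩ | ⟨h1, -, -⟩ <;> omega
            have hss : S w y ⊂ S x y := ⟨hsub, fun hsup => hwit_out (hsup hwit_in)⟩
            have hlt : (S w y).ncard < n := hcn ▸ Set.ncard_lt_ncard hss (Set.toFinite _)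
            exact ih _ hlt w y hbw (by omega) hy1 rfl
        · -- 3c: new chord (x, w)
          have hsub : S x w ⊆ S x y := by
            rintro ⟨q, r⟩ ⟨hqrA, hcr⟩
            have hqm := pos_lt a q
            have hrm := pos_lt a r
            have hcr' : Cross x w q r := hcr
            refine ⟨hqrA, ?_⟩
            show Cross x y q r
            rcases cross_decode a (by omega : pos a x < pos a w) hcr' with
              ⟨h1, h2, h3⟩ | ⟨h1, h2, h3⟩
            · rcases lt_or_ge (pos a q) (pos a y) with h4 | h4
              · refine cross_encode a h1 h4 ?_
                rcases h3 with h3 | h3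
                · exact Or.inl h3
                · exact Or.inr (by omega)
              · exfalso
                refine hT.2.2.1 u w q r huw hqrA
                  (cross_encode a (by omega) h2 ?_)
                rcases h3 with h3 | h3
                · exact Or.inl (by omega)
                · exact Or.inr h3
            · rcases lt_or_ge (pos a r) (pos a y) with h4 | h4
              · refine cross_encode' a h1 h4 ?_
                rcases h3 with h3 | h3
                · exact Or.inl h3
                · exact Or.inr (by omega)
              · exfalso
                refine hT.2.2.1 u w q r huw hqrA
                  (cross_encode' a (by omega) h2 ?_)
                rcases h3 with h3 | h3
                · exact Or.inl (by omega)
                · exact Or.inr h3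
          have hwit_in : (u, w) ∈ S x y :=
            ⟨huw, show Cross x y u w from cross_encode a (by omega) (by omega) (Or.inr hw)⟩
          have hwit_out : (u, w) ∉ S x w := by
            rintro ⟨-, hc⟩
            have hc' : Cross x w u w := hc
            rcases cross_decode a (by omega : pos a x < pos a w) hc' with
              ⟨h1, h2, h3 | h3⟩ | ⟨h1, h2, -⟩ <;> omega
          have hss : S x w ⊂ S x y := ⟨hsub, fun hsup => hwit_out (hsup hwit_in)⟩
          have hlt : (S x w).ncard < n := hcn ▸ Set.ncard_lt_ncard hss (Set.toFinite _)
          exact ih _ hlt x w hx1 hx2 (by omega) rfl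
      · -- Case 2: new chord (x, u)
        have hsub : S x u ⊆ S x y := by
          rintro ⟨q, r⟩ ⟨hqrA, hcr⟩
          have hqm := pos_lt a q
          have hrm := pos_lt a r
          have hcr' : Cross x u q r := hcr
          refine ⟨hqrA, ?_⟩
          show Cross x y q r
          rcases cross_decode a (by omega : pos a x < pos a u) hcr' with
            ⟨h1, h2, h3⟩ | ⟨h1, h2, h3⟩
          · rcases h3 with h3 | h3
            · exact cross_encode a h1 (by omega) (Or.inl h3)
            · rcases lt_or_ge (pos a y) (pos a r) with h4 | h4
              · exact cross_encode a h1 (by omega) (Or.inr h4)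
              · exfalso
                rcases hw with hw | hw
                · exact hT.2.2.1 w u q r hwuA hqrA
                    (cross_encode a (by omega) h2 (Or.inr h3))
                · exact hT.2.2.1 u w q r huw hqrA
                    (cross_encode' a h3 (by omega) (Or.inl h2))
          · rcases h3 with h3 | h3
            · exact cross_encode' a h1 (by omega) (Or.inl h3)
            · rcases lt_or_ge (pos a y) (pos a q) with h4 | h4
              · exact cross_encode' a h1 (by omega) (Or.inr h4)
              · exfalso
                rcases hw with hw | hw
                · exact hT.2.2.1 w u q r hwuA hqrA
                    (cross_encode' a (by omega) h2 (Or.inr h3))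
                · exact hT.2.2.1 u w q r huw hqrA
                    (cross_encode a h3 (by omega) (Or.inl h2))
        have hwit_in : (u, w) ∈ S x y := ⟨huw, show Cross x y u w from cross_encode a (by omega) hu2 hw⟩
        have hwit_out : (u, w) ∉ S x u := by
          rintro ⟨-, hc⟩
          have hc' : Cross x u u w := hc
          rcases cross_decode a (by omega : pos a x < pos a u) hc' with
            ⟨h1, h2, -⟩ | ⟨-, h2, h3 | h3⟩ <;> omega
        have hss : S x u ⊂ S x y := ⟨hsub, fun hsup => hwit_out (hsup hwit_in)⟩
        have hlt : (S x u).ncard < n := hcn ▸ Set.ncard_lt_ncard hss (Set.toFinite _)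
        exact ih _ hlt x u hx1 hx2 hdu rfl
  rcases cross_decode a hxy hXuw0 with ⟨h1, h2, h3⟩ | ⟨h1, h2, h3⟩
  · exact step u0 w0 huwA0 h1 h2 h3
  · exact step w0 u0 (hT.1 _ _ huwA0) h1 h2 h3

lemma endgame (A : Set (ZMod m × ZMod m)) (v : Fin 5 → ZMod m) (P0 P1 P2 P4 : Prop)
    [Decidable P0] [Decidable P1] [Decidable P2] [Decidable P4]
    (h0 : chiCyc A (v 1) (v 2) (v 3) (v 4) = if P2 ∨ P0 then 1 else -1)
    (h1 : chiCyc A (v 0) (v 2) (v 3) (v 4) = if P2 then 1 else -1)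
    (h2 : chiCyc A (v 0) (v 1) (v 3) (v 4) = if P4 ∨ P2 then 1 else -1)
    (h3 : chiCyc A (v 0) (v 1) (v 2) (v 4) = if P4 then 1 else -1)
    (h4 : chiCyc A (v 0) (v 1) (v 2) (v 3) = if P1 ∨ P4 then 1 else -1)
    (hx01 : ¬(P0 ∧ P1)) (hx12 : ¬(P1 ∧ P2)) (hx04 : ¬(P0 ∧ P4)) :
    ∃ (k : Fin 5) (ε : ℤ), (ε = 1 ∨ ε = -1) ∧
      ∀ i : Fin 5, circSign A v (k + i) = ε * (if (i : ℕ) % 2 = 0 then 1 else -1) := by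
  by_cases p0 : P0 <;> by_cases p1 : P1 <;> by_cases p2 : P2 <;> by_cases p4 : P4
  case _ =>
          exact absurd ⟨p0, p1⟩ hx01
  case _ =>
          exact absurd ⟨p0, p1⟩ hx01
  case _ =>
          exact absurd ⟨p0, p1⟩ hx01
  case _ =>
          exact absurd ⟨p0, p1⟩ hx01
  case _ =>
          exact absurd ⟨p0, p4⟩ hx04
  case _ =>
          refine ⟨3, 1, Or.inl rfl, ?_⟩
          intro i
          fin_cases i <;> simp [circSign, h0, h1, h2, h3, h4, p0, p1, p2, p4]
  case _ =>
          exact absurd ⟨p0, p4⟩ hx04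
  case _ =>
          refine ⟨1, 1, Or.inl rfl, ?_⟩
          intro i
          fin_cases i <;> simp [circSign, h0, h1, h2, h3, h4, p0, p1, p2, p4]
  case _ =>
          exact absurd ⟨p1, p2⟩ hx12
  case _ =>
          exact absurd ⟨p1, p2⟩ hx12
  case _ =>
          refine ⟨2, 1, Or.inl rfl, ?_⟩
          intro i
          fin_cases i <;> simp [circSign, h0, h1, h2, h3, h4, p0, p1, p2, p4]
  case _ =>
          refine ⟨4, 1, Or.inl rfl, ?_⟩
          intro i
          fin_cases i <;> simp [circSign, h0, h1, h2, h3, h4, p0, p1, p2, p4]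
  case _ =>
          refine ⟨0, 1, Or.inl rfl, ?_⟩
          intro i
          fin_cases i <;> simp [circSign, h0, h1, h2, h3, h4, p0, p1, p2, p4]
  case _ =>
          refine ⟨3, 1, Or.inl rfl, ?_⟩
          intro i
          fin_cases i <;> simp [circSign, h0, h1, h2, h3, h4, p0, p1, p2, p4]
  case _ =>
          refine ⟨2, 1, Or.inl rfl, ?_⟩
          intro i
          fin_cases i <;> simp [circSign, h0, h1, h2, h3, h4, p0, p1, p2, p4]
  case _ =>
          refine ⟨0, -1, Or.inr rfl, ?_⟩
          intro i
          fin_cases i <;> simp [circSign, h0, h1, h2, h3, h4, p0, p1, p2, p4]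


end CyclicTri

open CyclicTri in
/-- Every signed circuit of `M_T` is supported on a 5-subset, and in a suitable cyclic
labelling `a ≺ b ≺ c ≺ d ≺ e` of the support its positive part is `{a, c, e}` and its
negative part `{b, d}`, or vice versa: the intrinsic circuit signs, read cyclically,
form the alternating pattern `(+,-,+,-,+)` up to rotation and global sign. -/
theorem stmt_7 (m : ℕ) (hm : 4 ≤ m) (A : Set (ZMod m × ZMod m))
    (hT : IsTriangulation A) (v : Fin 5 → ZMod m) (hv : Cyc5 v) :
    ∃ (k : Fin 5) (ε : ℤ), (ε = 1 ∨ ε = -1) ∧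
      ∀ i : Fin 5, circSign A v (k + i) = ε * (if (i : ℕ) % 2 = 0 then 1 else -1) := by
  classical
  haveI : NeZero m := ⟨by omega⟩
  obtain ⟨h1, h2, h3, h4⟩ := hv
  have hm1 := pos_lt (v 0) (v 1)
  have hm2 := pos_lt (v 0) (v 2)
  have hm3 := pos_lt (v 0) (v 3)
  have hm4 := pos_lt (v 0) (v 4)
  set Q20 : Prop := ∃ x y, (x, y) ∈ A ∧ pos (v 0) (v 2) ≤ pos (v 0) x ∧
      pos (v 0) x < pos (v 0) (v 3) ∧ pos (v 0) y < pos (v 0) (v 1) with hQ20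
  set Q13 : Prop := ∃ x y, (x, y) ∈ A ∧ pos (v 0) (v 1) ≤ pos (v 0) x ∧
      pos (v 0) x < pos (v 0) (v 2) ∧ pos (v 0) (v 3) ≤ pos (v 0) y ∧
      pos (v 0) y < pos (v 0) (v 4) with hQ13
  set Q24 : Prop := ∃ x y, (x, y) ∈ A ∧ pos (v 0) (v 2) ≤ pos (v 0) x ∧
      pos (v 0) x < pos (v 0) (v 3) ∧ pos (v 0) (v 4) ≤ pos (v 0) y with hQ24
  set Q14 : Prop := ∃ x y, (x, y) ∈ A ∧ pos (v 0) (v 1) ≤ pos (v 0) x ∧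
      pos (v 0) x < pos (v 0) (v 2) ∧ pos (v 0) (v 4) ≤ pos (v 0) y with hQ14
  -- conversions
  have conv0 : PosCase A (v 1) (v 2) (v 3) (v 4) ↔ (Q24 ∨ Q20) := by
    constructor
    · rintro ⟨x, y, hA, k1, k2, k3, k4, k5⟩
      have hx := pos_lt (v 0) x
      have hy := pos_lt (v 0) y
      simp only [pos_base (v 0) (v 1)] at k1 k2 k3 k4 k5
      split_ifs at k1 k2 k3 k4 k5 <;>
        first
          | exact Or.inl ⟨x, y, hA, by omega, by omega, by omega⟩
          | exact Or.inr ⟨x, y, hA, by omega, by omega, by omega⟩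
          | (exfalso; omega)
    · rintro (⟨x, y, hA, k1, k2, k3⟩ | ⟨x, y, hA, k1, k2, k3⟩) <;>
      · have hx := pos_lt (v 0) x
        have hy := pos_lt (v 0) y
        refine ⟨x, y, hA, ?_, ?_, ?_, ?_, ?_⟩ <;>
          (simp only [pos_base (v 0) (v 1)]; split_ifs <;> omega)
  have conv1 : PosCase A (v 0) (v 2) (v 3) (v 4) ↔ Q24 := by
    constructor
    · rintro ⟨x, y, hA, k1, k2, k3, k4, k5⟩
      exact ⟨x, y, hA, k2, k3, k5⟩
    · rintro ⟨x, y, hA, k1, k2, k3⟩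
      exact ⟨x, y, hA, by omega, k1, k2, by omega, k3⟩
  have conv2 : PosCase A (v 0) (v 1) (v 3) (v 4) ↔ (Q14 ∨ Q24) := by
    constructor
    · rintro ⟨x, y, hA, k1, k2, k3, k4, k5⟩
      rcases lt_or_ge (pos (v 0) x) (pos (v 0) (v 2)) with hx | hx
      · exact Or.inl ⟨x, y, hA, k2, hx, k5⟩
      · exact Or.inr ⟨x, y, hA, hx, k3, k5⟩
    · rintro (⟨x, y, hA, k1, k2, k3⟩ | ⟨x, y, hA, k1, k2, k3⟩)
      · exact ⟨x, y, hA, by omega, k1, by omega, by omega, k3⟩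
      · exact ⟨x, y, hA, by omega, by omega, k2, by omega, k3⟩
  have conv3 : PosCase A (v 0) (v 1) (v 2) (v 4) ↔ Q14 := by
    constructor
    · rintro ⟨x, y, hA, k1, k2, k3, k4, k5⟩
      exact ⟨x, y, hA, k2, k3, k5⟩
    · rintro ⟨x, y, hA, k1, k2, k3⟩
      exact ⟨x, y, hA, by omega, k1, k2, by omega, k3⟩
  have conv4 : PosCase A (v 0) (v 1) (v 2) (v 3) ↔ (Q13 ∨ Q14) := by
    constructor
    · rintro ⟨x, y, hA, k1, k2, k3, k4, k5⟩
      rcases lt_or_ge (pos (v 0) y) (pos (v 0) (v 4)) with hy | hy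
      · exact Or.inl ⟨x, y, hA, k2, k3, k5, hy⟩
      · exact Or.inr ⟨x, y, hA, k2, k3, hy⟩
    · rintro (⟨x, y, hA, k1, k2, k3, k4⟩ | ⟨x, y, hA, k1, k2, k3⟩)
      · exact ⟨x, y, hA, by omega, k1, k2, by omega, k3⟩
      · exact ⟨x, y, hA, by omega, k1, k2, by omega, by omega⟩
  -- exclusions
  have X01 : ¬(Q20 ∧ Q13) := by
    rintro ⟨⟨x, y, hA, a1, a2, a3⟩, ⟨x', y', hA', b1, b2, b3, b4⟩⟩
    exact hT.2.2.1 x' y' x y hA' hA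
      (cross_encode (v 0) (by omega) (by omega) (Or.inl (by omega)))
  have X12 : ¬(Q13 ∧ Q24) := by
    rintro ⟨⟨x, y, hA, a1, a2, a3, a4⟩, ⟨x', y', hA', b1, b2, b3⟩⟩
    exact hT.2.2.1 x y x' y' hA hA'
      (cross_encode (v 0) (by omega) (by omega) (Or.inr (by omega)))
  have X04 : ¬(Q20 ∧ Q14) := by
    rintro ⟨⟨x, y, hA, a1, a2, a3⟩, ⟨x', y', hA', b1, b2, b3⟩⟩
    exact hT.2.2.1 x' y' x y hA' hA
      (cross_encode (v 0) (by omega) (by omega) (Or.inl (by omega)))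
  -- totality
  have cyc0 : Cyc4 (v 1) (v 2) (v 3) (v 4) := by
    refine ⟨?_, ?_, ?_⟩ <;>
      (simp only [pos_base (v 0) (v 1)]; split_ifs <;> omega)
  have t0 := tot hm hT cyc0
  have t1 := tot hm hT (show Cyc4 (v 0) (v 2) (v 3) (v 4) from ⟨by omega, h3, h4⟩)
  have t2 := tot hm hT (show Cyc4 (v 0) (v 1) (v 3) (v 4) from ⟨h1, by omega, h4⟩)
  have t3 := tot hm hT (show Cyc4 (v 0) (v 1) (v 2) (v 4) from ⟨h1, h2, by omega⟩)
  have t4 := tot hm hT (show Cyc4 (v 0) (v 1) (v 2) (v 3) from ⟨h1, h2, h3⟩)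
  -- chi equations
  have H0 : chiCyc A (v 1) (v 2) (v 3) (v 4) = if Q24 ∨ Q20 then 1 else -1 := by
    by_cases hp : PosCase A (v 1) (v 2) (v 3) (v 4)
    · rw [chiCyc, if_pos hp, if_pos (conv0.mp hp)]
    · rw [chiCyc, if_neg hp, if_pos (t0.resolve_left hp),
        if_neg (fun h => hp (conv0.mpr h))]
  have H1 : chiCyc A (v 0) (v 2) (v 3) (v 4) = if Q24 then 1 else -1 := by
    by_cases hp : PosCase A (v 0) (v 2) (v 3) (v 4)
    · rw [chiCyc, if_pos hp, if_pos (conv1.mp hp)]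
    · rw [chiCyc, if_neg hp, if_pos (t1.resolve_left hp),
        if_neg (fun h => hp (conv1.mpr h))]
  have H2 : chiCyc A (v 0) (v 1) (v 3) (v 4) = if Q14 ∨ Q24 then 1 else -1 := by
    by_cases hp : PosCase A (v 0) (v 1) (v 3) (v 4)
    · rw [chiCyc, if_pos hp, if_pos (conv2.mp hp)]
    · rw [chiCyc, if_neg hp, if_pos (t2.resolve_left hp),
        if_neg (fun h => hp (conv2.mpr h))]
  have H3 : chiCyc A (v 0) (v 1) (v 2) (v 4) = if Q14 then 1 else -1 := by
    by_cases hp : PosCase A (v 0) (v 1) (v 2) (v 4)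
    · rw [chiCyc, if_pos hp, if_pos (conv3.mp hp)]
    · rw [chiCyc, if_neg hp, if_pos (t3.resolve_left hp),
        if_neg (fun h => hp (conv3.mpr h))]
  have H4 : chiCyc A (v 0) (v 1) (v 2) (v 3) = if Q13 ∨ Q14 then 1 else -1 := by
    by_cases hp : PosCase A (v 0) (v 1) (v 2) (v 3)
    · rw [chiCyc, if_pos hp, if_pos (conv4.mp hp)]
    · rw [chiCyc, if_neg hp, if_pos (t4.resolve_left hp),
        if_neg (fun h => hp (conv4.mpr h))]
  exact endgame A v Q20 Q13 Q24 Q14 H0 H1 H2 H3 H4 X01 X12 X04
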